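/- arXiv:1810.10248 — 3 statements merged into one kernel-verified Lean document; each statement's English description precedes it below -/
import Mathlib

section
/- For every f ∈ L¹([0,1], ρ_N) and every Borel set A ⊆ [0,1], one has ∫_{R_N^{−1}(A)} f dρ_N = ∫_A (Σ_{i=N}^∞ P_{N,i}(x) f(u_{N,i}(x))) dρ_N(x); i.e., the Perron–Frobenius operator of R_N under ρ_N is given by Uf(x) = Σ_{i≥N} P_{N,i}(x) f(u_{N,i}(x)). -/
open MeasureTheory Set Filter Topology

/-- The Rényi-type continued fraction transformation. -/
noncomputable def RN (N : ℕ) (x : ℝ) : ℝ :=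
  if x = 1 then 0 else Int.fract ((N : ℝ) / (1 - x))

/-- The invariant measure ρ_N on the Borel subsets of [0,1]. -/
noncomputable def rhoN (N : ℕ) : MeasureTheory.Measure ℝ :=
  (MeasureTheory.volume.restrict (Set.Icc (0:ℝ) 1)).withDensity
    (fun x => ENNReal.ofReal ((Real.log ((N : ℝ) / ((N : ℝ) - 1)))⁻¹ * (x + N - 1)⁻¹))

/-- The kernel P_{N,i}(x) = (x+N-1)/((x+i)(x+i-1)). -/
noncomputable def PNi (N i : ℕ) (x : ℝ) : ℝ :=
  (x + N - 1) / ((x + i) * (x + i - 1))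

/-- The inverse branches u_{N,i}(x) = 1 - N/(x+i). -/
noncomputable def uNi (N i : ℕ) (x : ℝ) : ℝ := 1 - (N : ℝ) / (x + i)

/-- The Perron–Frobenius operator U of R_N under ρ_N:
`U f(x) = Σ_{i ≥ N} P_{N,i}(x) f(u_{N,i}(x))`, indexed by i = N + k. -/
noncomputable def U (N : ℕ) (f : ℝ → ℝ) (x : ℝ) : ℝ :=
  ∑' k : ℕ, PNi N (N + k) x * f (uNi N (N + k) x)

/-!
On the `k`-th branch of `R_N` the inverse is `u = uNi N (N + k)`, and the substitution `x = u y`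
turns the density `1 / (x + N - 1)` of `ρ_N` into
`|u' y| / (u y + N - 1) = P_{N,N+k}(y) / (y + N - 1)`; that is, `u` pushes `P_{N,N+k} • ρ_N`
forward to `ρ_N` restricted to the branch. Summing over the branches, which partition `[0,1)`,
gives the formula. The same identity applied to `‖f‖` bounds `∑ₖ ∫_A P_{N,N+k} ‖f ∘ u‖ dρ_N`
by `∫ ‖f‖ dρ_N`, which justifies exchanging sum and integral.
-/

open scoped ENNReal NNReal
open Function

section InverseBranches

variable {α ι E : Type*} [MeasurableSpace α] [NormedAddCommGroup E] [NormedSpace ℝ E]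
  {μ : Measure α} {T : α → α} {u : ι → α → α} {P : ι → α → ℝ≥0} {I : ι → Set α}

lemma setIntegral_eq_integral_smul_comp_of_map_withDensity {k : ι}
    (hu : MeasurableEmbedding (u k)) (hP : Measurable (P k))
    (hmap : (μ.withDensity fun x => (P k x : ℝ≥0∞)).map (u k) = μ.restrict (I k)) (g : α → E) :
    ∫ x in I k, g x ∂μ = ∫ y, (P k y : ℝ) • g (u k y) ∂μ := by
  rw [← hmap, hu.integral_map, integral_withDensity_eq_integral_smul hP]
  rfl

lemma setLIntegral_eq_lintegral_mul_comp_of_map_withDensity {k : ι}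
    (hu : MeasurableEmbedding (u k)) (hP : Measurable (P k))
    (hmap : (μ.withDensity fun x => (P k x : ℝ≥0∞)).map (u k) = μ.restrict (I k))
    (g : α → ℝ≥0∞) :
    ∫⁻ x in I k, g x ∂μ = ∫⁻ y, P k y * g (u k y) ∂μ := by
  rw [← hmap, hu.lintegral_map,
    lintegral_withDensity_eq_lintegral_mul_non_measurable _ hP.coe_nnreal_ennreal
      (.of_forall fun _ => ENNReal.coe_lt_top)]
  rfl

lemma aestronglyMeasurable_smul_comp_of_map_withDensity {k : ι}
    (hu : MeasurableEmbedding (u k)) (hP : Measurable (P k))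
    (hmap : (μ.withDensity fun x => (P k x : ℝ≥0∞)).map (u k) = μ.restrict (I k))
    {f : α → E} (hf : AEStronglyMeasurable f μ) :
    AEStronglyMeasurable (fun y => (P k y : ℝ) • f (u k y)) μ := by
  rw [← aestronglyMeasurable_withDensity_iff hP]
  change AEStronglyMeasurable (f ∘ u k) _
  rw [← hu.aestronglyMeasurable_map_iff, hmap]
  exact hf.restrict

theorem setIntegral_preimage_eq_setIntegral_tsum_smul [Countable ι] (hT : Measurable T)
    (hu : ∀ k, MeasurableEmbedding (u k)) (hP : ∀ k, Measurable (P k))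
    (hI : ∀ k, MeasurableSet (I k)) (hdisj : Pairwise (Disjoint on I))
    (hcover : ∀ᵐ x ∂μ, x ∈ ⋃ k, I k)
    -- change of variables along the inverse branch `u k` of `T` on `I k`, Jacobian weight `P k`
    (hmap : ∀ k, (μ.withDensity fun x => (P k x : ℝ≥0∞)).map (u k) = μ.restrict (I k))
    (hTu : ∀ k, ∀ᵐ y ∂μ, T (u k y) = y)
    {f : α → E} (hf : Integrable f μ) {A : Set α} (hA : MeasurableSet A) :
    ∫ x in T ⁻¹' A, f x ∂μ = ∫ x in A, ∑' k, (P k x : ℝ) • f (u k x) ∂μ := by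
  set g := (T ⁻¹' A).indicator f
  have hμ : μ.restrict (⋃ k, I k) = μ := Measure.restrict_eq_self_of_ae_mem hcover
  have hbranch : ∀ k, (fun y => (P k y : ℝ) • g (u k y)) =ᵐ[μ]
      A.indicator fun y => (P k y : ℝ) • f (u k y) := fun k => by
    filter_upwards [hTu k] with y hy
    by_cases hyA : y ∈ A <;> simp [g, Set.indicator, hy, hyA]
  have hsplit : ∫ x in T ⁻¹' A, f x ∂μ = ∑' k, ∫ x in A, (P k x : ℝ) • f (u k x) ∂μ := by
    rw [← integral_indicator (hT hA)]
    conv_lhs => rw [← hμ]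
    rw [integral_iUnion hI hdisj (hf.indicator (hT hA)).integrableOn]
    refine tsum_congr fun k => ?_
    rw [setIntegral_eq_integral_smul_comp_of_map_withDensity (hu k) (hP k) (hmap k),
      integral_congr_ae (hbranch k), integral_indicator hA]
  have hfinite : ∑' k, ∫⁻ x in A, ‖(P k x : ℝ) • f (u k x)‖ₑ ∂μ ≠ ∞ := by
    have hsum : ∑' k, ∫⁻ x in A, ‖(P k x : ℝ) • f (u k x)‖ₑ ∂μ = ∫⁻ x, ‖g x‖ₑ ∂μ := by
      conv_rhs => rw [← hμ]
      rw [lintegral_iUnion hI hdisj]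
      refine tsum_congr fun k => ?_
      rw [setLIntegral_eq_lintegral_mul_comp_of_map_withDensity (hu k) (hP k) (hmap k),
        ← lintegral_indicator hA]
      refine lintegral_congr_ae ?_
      filter_upwards [hbranch k] with y hy
      rw [← enorm_indicator_eq_indicator_enorm, ← hy, enorm_smul]
      simp
    rw [hsum]
    exact ((hf.indicator (hT hA)).hasFiniteIntegral).ne
  rw [hsplit, integral_tsum (fun k => (aestronglyMeasurable_smul_comp_of_map_withDensity
    (hu k) (hP k) (hmap k) hf.1).restrict) hfinite]

end InverseBranches

/-- The interval `[1 - N/(N+k), 1 - N/(N+k+1))`, on which `RN N x = N/(1-x) - (N+k)`. -/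
def renyiBranch (N k : ℕ) : Set ℝ := {x | ⌊(N : ℝ) / (1 - x)⌋ = N + k}

noncomputable def rhoDensity (N : ℕ) (x : ℝ) : ℝ :=
  (Real.log ((N : ℝ) / ((N : ℝ) - 1)))⁻¹ * (x + N - 1)⁻¹

section RenyiMap

variable {N : ℕ}

lemma div_one_sub_uNi (hN : N ≠ 0) (i : ℕ) (x : ℝ) : (N : ℝ) / (1 - uNi N i x) = x + i := by
  rw [uNi, sub_sub_cancel, div_div_cancel₀ (Nat.cast_ne_zero.2 hN)]

lemma uNi_injective (hN : N ≠ 0) (i : ℕ) : Injective (uNi N i) := fun a b h => by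
  simpa [div_one_sub_uNi hN] using congrArg (fun y => (N : ℝ) / (1 - y)) h

lemma measurable_uNi (N i : ℕ) : Measurable (uNi N i) := by
  unfold uNi; fun_prop

lemma measurableEmbedding_uNi (hN : N ≠ 0) (i : ℕ) : MeasurableEmbedding (uNi N i) :=
  (measurable_uNi N i).measurableEmbedding (uNi_injective hN i)

lemma hasDerivAt_uNi (i : ℕ) {x : ℝ} (hx : x + i ≠ 0) :
    HasDerivAt (uNi N i) (N / (x + i) ^ 2) x := by
  have h := ((hasDerivAt_const x (N : ℝ)).div ((hasDerivAt_id' x).add_const (i : ℝ)) hx).const_sub 1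
  exact h.congr_deriv (by ring)

lemma measurable_RN (N : ℕ) : Measurable (RN N) := by
  unfold RN
  exact Measurable.ite (measurableSet_singleton 1) measurable_const (by fun_prop)

lemma RN_uNi (hN : N ≠ 0) (k : ℕ) {y : ℝ} (hy : y ∈ Ico (0 : ℝ) 1) :
    RN N (uNi N (N + k) y) = y := by
  have hpos : (0 : ℝ) < y + (N + k : ℕ) := by have := hy.1; positivity
  have hne : uNi N (N + k) y ≠ 1 := by
    intro h
    simpa [h] using (div_one_sub_uNi hN (N + k) y).trans_ne hpos.ne'
  rw [RN, if_neg hne, div_one_sub_uNi hN, Int.fract_add_natCast, Int.fract_eq_self.2 hy]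

lemma measurableSet_renyiBranch (N k : ℕ) : MeasurableSet (renyiBranch N k) :=
  measurableSet_eq_fun (by fun_prop) measurable_const

lemma pairwise_disjoint_renyiBranch : Pairwise (Disjoint on renyiBranch N) :=
  fun j k hjk => Set.disjoint_left.2 fun x hj hk => hjk (by
    simp only [renyiBranch, mem_ofPred_eq] at hj hk
    omega)

lemma Ico_subset_iUnion_renyiBranch : Ico (0 : ℝ) 1 ⊆ ⋃ k, renyiBranch N k := by
  intro x hx
  have hN_le : (N : ℤ) ≤ ⌊(N : ℝ) / (1 - x)⌋ := by
    rw [Int.le_floor, le_div_iff₀ (by linarith [hx.2])]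
    push_cast
    nlinarith [hx.1, (Nat.cast_nonneg N : (0 : ℝ) ≤ N)]
  refine mem_iUnion.2 ⟨(⌊(N : ℝ) / (1 - x)⌋ - N).toNat, ?_⟩
  simp only [renyiBranch, mem_ofPred_eq]
  omega

lemma image_uNi_Ico (hN : N ≠ 0) (k : ℕ) :
    uNi N (N + k) '' Ico 0 1 = renyiBranch N k := by
  ext x
  constructor
  · rintro ⟨y, hy, rfl⟩
    simp only [renyiBranch, mem_ofPred_eq, div_one_sub_uNi hN, Int.floor_add_natCast,
      Int.floor_eq_zero_iff.2 hy]
    push_cast; ring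
  · intro hx
    simp only [renyiBranch, mem_ofPred_eq] at hx
    have hx1 : 1 - x ≠ 0 := by
      intro h
      rw [h, div_zero, Int.floor_zero] at hx
      omega
    refine ⟨Int.fract ((N : ℝ) / (1 - x)), ⟨Int.fract_nonneg _, Int.fract_lt_one _⟩, ?_⟩
    have hN' : (N : ℝ) ≠ 0 := Nat.cast_ne_zero.2 hN
    have : Int.fract ((N : ℝ) / (1 - x)) + (N + k : ℕ) = N / (1 - x) := by
      rw [← Int.self_sub_floor, hx]; push_cast; ring
    rw [uNi, this]
    field_simp
    ring

lemma renyiBranch_subset_Ico (hN : N ≠ 0) (k : ℕ) : renyiBranch N k ⊆ Ico 0 1 := by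
  rw [← image_uNi_Ico hN]
  rintro _ ⟨y, hy, rfl⟩
  have hpos : (0 : ℝ) < y + (N + k : ℕ) := by have := hy.1; positivity
  have hle : (N : ℝ) ≤ y + (N + k : ℕ) := by
    push_cast; linarith [hy.1, (Nat.cast_nonneg k : (0 : ℝ) ≤ k)]
  rw [uNi]
  constructor
  · have : (N : ℝ) / (y + (N + k : ℕ)) ≤ 1 := (div_le_one hpos).2 hle
    linarith
  · have : 0 < (N : ℝ) / (y + (N + k : ℕ)) := div_pos (by positivity) hpos
    linarith

lemma measurable_PNi (N i : ℕ) : Measurable (PNi N i) := by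
  unfold PNi; fun_prop

lemma measurable_rhoDensity (N : ℕ) : Measurable (rhoDensity N) := by
  unfold rhoDensity; fun_prop

lemma PNi_nonneg (hN : 1 ≤ N) {i : ℕ} (hi : 1 ≤ i) {x : ℝ} (hx : 0 ≤ x) : 0 ≤ PNi N i x := by
  have hN' : (1 : ℝ) ≤ N := by exact_mod_cast hN
  have hi' : (1 : ℝ) ≤ i := by exact_mod_cast hi
  exact div_nonneg (by linarith) (mul_nonneg (by linarith) (by linarith))

lemma deriv_uNi_mul_rhoDensity_uNi (hN : 2 ≤ N) {i : ℕ} (hi : N ≤ i) {x : ℝ} (hx : 0 ≤ x) :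
    N / (x + i) ^ 2 * rhoDensity N (uNi N i x) = rhoDensity N x * PNi N i x := by
  have hN' : (2 : ℝ) ≤ N := by exact_mod_cast hN
  have hi' : (N : ℝ) ≤ i := by exact_mod_cast hi
  have hxi : x + i ≠ 0 := by linarith
  have hxi1 : x + i - 1 ≠ 0 := by linarith
  have hxN : x + N - 1 ≠ 0 := by linarith
  have hu : uNi N i x + N - 1 = N * (x + i - 1) / (x + i) := by
    rw [uNi]; field_simp; ring
  rw [rhoDensity, rhoDensity, PNi, hu]
  field_simp

lemma rhoN_eq_withDensity_Ico (N : ℕ) :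
    rhoN N = (volume.restrict (Ico 0 1)).withDensity fun x => ENNReal.ofReal (rhoDensity N x) := by
  rw [rhoN, Measure.restrict_congr_set Ico_ae_eq_Icc]
  rfl

lemma ae_mem_Ico_rhoN (N : ℕ) : ∀ᵐ x ∂rhoN N, x ∈ Ico (0 : ℝ) 1 := by
  rw [rhoN_eq_withDensity_Ico]
  exact (withDensity_absolutelyContinuous _ _).ae_le (ae_restrict_mem measurableSet_Ico)

lemma map_withDensity_PNi (hN : 2 ≤ N) (k : ℕ) :
    ((rhoN N).withDensity fun x => ((PNi N (N + k) x).toNNReal : ℝ≥0∞)).map (uNi N (N + k)) =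
      (rhoN N).restrict (renyiBranch N k) := by
  have hN0 : N ≠ 0 := by omega
  ext S hS
  have hpre : MeasurableSet (uNi N (N + k) ⁻¹' S) := measurable_uNi N (N + k) hS
  have hs : MeasurableSet (uNi N (N + k) ⁻¹' S ∩ Ico 0 1) := hpre.inter measurableSet_Ico
  have hlhs : ((rhoN N).withDensity fun x => ((PNi N (N + k) x).toNNReal : ℝ≥0∞)).map
      (uNi N (N + k)) S = ∫⁻ y in uNi N (N + k) ⁻¹' S ∩ Ico 0 1,
        ENNReal.ofReal (rhoDensity N y) * ENNReal.ofReal (PNi N (N + k) y) := by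
    rw [Measure.map_apply (measurable_uNi N (N + k)) hS, withDensity_apply _ hpre,
      rhoN_eq_withDensity_Ico, restrict_withDensity hpre, Measure.restrict_restrict hpre,
      lintegral_withDensity_eq_lintegral_mul _ (measurable_rhoDensity N).ennreal_ofReal
        (measurable_PNi N (N + k)).real_toNNReal.coe_nnreal_ennreal]
    rfl
  have hrhs : (rhoN N).restrict (renyiBranch N k) S =
      ∫⁻ x in uNi N (N + k) '' (uNi N (N + k) ⁻¹' S ∩ Ico 0 1),
        ENNReal.ofReal (rhoDensity N x) := by
    have hSI := hS.inter (measurableSet_renyiBranch N k)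
    rw [image_preimage_inter, image_uNi_Ico hN0, Measure.restrict_apply hS,
      rhoN_eq_withDensity_Ico, withDensity_apply _ hSI, Measure.restrict_restrict hSI,
      inter_eq_left.2 (inter_subset_right.trans (renyiBranch_subset_Ico hN0 k))]
  rw [hlhs, hrhs, lintegral_image_eq_lintegral_abs_deriv_mul hs
    (fun y hy => (hasDerivAt_uNi (N + k) (by have := hy.2.1; positivity)).hasDerivWithinAt)
    (uNi_injective hN0 _).injOn]
  refine setLIntegral_congr_fun hs fun y hy => ?_
  have hPNi := PNi_nonneg (N := N) (by omega) (by omega : 1 ≤ N + k) hy.2.1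
  rw [← ENNReal.ofReal_mul (abs_nonneg _), abs_of_nonneg (by positivity),
    deriv_uNi_mul_rhoDensity_uNi hN (by omega) hy.2.1, ENNReal.ofReal_mul' hPNi]

end RenyiMap

theorem stmt4 (N : ℕ) (hN : 2 ≤ N) (f : ℝ → ℝ)
    (hf : MeasureTheory.Integrable f (rhoN N))
    (A : Set ℝ) (hA : MeasurableSet A) (hA' : A ⊆ Set.Icc (0:ℝ) 1) :
    ∫ x in RN N ⁻¹' A, f x ∂(rhoN N) = ∫ x in A, U N f x ∂(rhoN N) := by
  have hN0 : N ≠ 0 := by omega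
  rw [setIntegral_preimage_eq_setIntegral_tsum_smul (measurable_RN N)
    (fun k => measurableEmbedding_uNi hN0 (N + k))
    (fun k => (measurable_PNi N (N + k)).real_toNNReal) (measurableSet_renyiBranch N)
    pairwise_disjoint_renyiBranch
    (by filter_upwards [ae_mem_Ico_rhoN N] with x hx using Ico_subset_iUnion_renyiBranch hx)
    (map_withDensity_PNi hN)
    (fun k => by filter_upwards [ae_mem_Ico_rhoN N] with y hy using RN_uNi hN0 k hy) hf hA]
  refine setIntegral_congr_fun hA fun x hx => tsum_congr fun k => ?_
  rw [smul_eq_mul, Real.coe_toNNReal _ (PNi_nonneg (by omega) (by omega) (hA' hx).1)]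
end

section
/- Fix real parameters e > 0 and t ∈ [0,1], and define g(x) = N/(eNx + (t+1)(1−x)) − (N−1+x)/(e(Nx+1−x) + (t+1)(1−x)) for x ∈ [0,1]. Then for every x ∈ [0,1], Σ_{i=N}^∞ P_{N,i}(x) g(u_{N,i}(x)) = 1/(ex + t + 1); i.e., U g(x) = 1/(ex+t+1) on [0,1]. -/
open MeasureTheory Set Filter Topology

/-! Put `s = x + N + k` and `D y = e y + t + 1`. The branch is `u = (x + k) / s`, at which
`g u = s / D (x + k) - (s - 1) / D (x + k + 1)`, while `P_{N,N+k}(x) = (x + N - 1) / (s (s - 1))`.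
Partial fractions turn the `k`-th term into `T k - T (k + 1)` with
`T k = gTail N e t x k = (x + N - 1) / ((s - 1) D (x + k))`; since `T` decreases to `0`, the
series telescopes to `T 0 = 1 / D x`. -/

theorem Antitone.hasSum_sub_succ {f : ℕ → ℝ} {l : ℝ} (hf : Antitone f)
    (hl : Tendsto f atTop (𝓝 l)) : HasSum (fun n ↦ f n - f (n + 1)) (f 0 - l) := by
  rw [hasSum_iff_tendsto_nat_of_nonneg fun n ↦ sub_nonneg.2 (hf n.le_succ)]
  simpa only [Finset.sum_range_sub'] using tendsto_const_nhds.sub hl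

noncomputable def gFun (N : ℕ) (e t x : ℝ) : ℝ :=
  N / (e * N * x + (t + 1) * (1 - x)) - (N - 1 + x) / (e * (N * x + 1 - x) + (t + 1) * (1 - x))

noncomputable def gTail (N : ℕ) (e t x : ℝ) (k : ℕ) : ℝ :=
  (x + N - 1) / ((x + N + k - 1) * (e * (x + k) + t + 1))

section
variable {N : ℕ} {e t x : ℝ}

lemma gFun_one_sub_div_add {y : ℝ} (hN : (N : ℝ) ≠ 0) (hs : y + N ≠ 0)
    (h₀ : e * y + t + 1 ≠ 0) (h₁ : e * (y + 1) + t + 1 ≠ 0) :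
    gFun N e t (1 - N / (y + N)) =
      (y + N) / (e * y + t + 1) - (y + N - 1) / (e * (y + 1) + t + 1) := by
  have hu₀ : e * N * (1 - N / (y + N)) + (t + 1) * (1 - (1 - N / (y + N)))
      = N * (e * y + t + 1) / (y + N) := by
    field_simp; ring
  have hu₁ : e * (N * (1 - N / (y + N)) + 1 - (1 - N / (y + N)))
      + (t + 1) * (1 - (1 - N / (y + N)))
      = N * (e * (y + 1) + t + 1) / (y + N) := by
    field_simp; ring
  rw [gFun, hu₀, hu₁]
  field_simp
  ring

variable (ha : 0 < x + N - 1) (he : 0 ≤ e) (hD : 0 < e * x + t + 1)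
include ha he hD

lemma gTail_denom_pos (k : ℕ) : 0 < (x + N + k - 1) * (e * (x + k) + t + 1) := by
  have hk : (0 : ℝ) ≤ k := k.cast_nonneg
  have hek : 0 ≤ e * k := mul_nonneg he hk
  apply mul_pos <;> nlinarith

lemma PNi_mul_gFun_uNi (hN : N ≠ 0) (k : ℕ) :
    PNi N (N + k) x * gFun N e t (uNi N (N + k) x) = gTail N e t x k - gTail N e t x (k + 1) := by
  have hk : (0 : ℝ) ≤ k := k.cast_nonneg
  have hek : 0 ≤ e * k := mul_nonneg he hk
  have h₀ : e * (x + k) + t + 1 ≠ 0 := by nlinarith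
  have h₁ : e * (x + k + 1) + t + 1 ≠ 0 := by nlinarith
  have hs : x + k + N ≠ 0 := by linarith
  have hs₁ : x + k + N - 1 ≠ 0 := by linarith
  have hxi : x + ((N + k : ℕ) : ℝ) = x + k + N := by push_cast; ring
  have hsplit : ∀ a c D₀ D₁ : ℝ, c ≠ 0 → c - 1 ≠ 0 → D₀ ≠ 0 → D₁ ≠ 0 →
      a / (c * (c - 1)) * (c / D₀ - (c - 1) / D₁) = a / ((c - 1) * D₀) - a / (c * D₁) := by
    intros; field_simp
  rw [uNi, hxi, gFun_one_sub_div_add (Nat.cast_ne_zero.2 hN) hs h₀ h₁, PNi, hxi,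
    hsplit _ _ _ _ hs hs₁ h₀ h₁, gTail, gTail]
  push_cast
  ring

omit he hD in
lemma gTail_zero : gTail N e t x 0 = 1 / (e * x + t + 1) := by
  rw [gTail, Nat.cast_zero, add_zero, add_zero, ← div_div, div_self ha.ne']

lemma gTail_antitone : Antitone (gTail N e t x) := by
  refine antitone_nat_of_succ_le fun k ↦
    div_le_div_of_nonneg_left ha.le (gTail_denom_pos ha he hD k) ?_
  have hk : (0 : ℝ) ≤ k := k.cast_nonneg
  have hek : 0 ≤ e * k := mul_nonneg he hk
  push_cast
  nlinarith

end

lemma tendsto_gTail_atTop {N : ℕ} {e t x : ℝ} (he : 0 < e) :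
    Tendsto (gTail N e t x) atTop (𝓝 0) := by
  have hx_add : Tendsto (fun k : ℕ ↦ x + k) atTop atTop :=
    tendsto_atTop_add_const_left _ _ tendsto_natCast_atTop_atTop
  refine tendsto_const_nhds.div_atTop (Tendsto.atTop_mul_atTop₀ ?_ ?_)
  · refine tendsto_atTop_add_const_right _ _ ?_
    exact tendsto_atTop_add_const_left _ _ tendsto_natCast_atTop_atTop
  · refine tendsto_atTop_add_const_right _ _ (tendsto_atTop_add_const_right _ _ ?_)
    exact hx_add.const_mul_atTop he

theorem stmt12 (N : ℕ) (hN : 2 ≤ N) (e t : ℝ) (he : 0 < e) (ht : t ∈ Set.Icc (0:ℝ) 1)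
    (g : ℝ → ℝ)
    (hg : g = fun x => (N : ℝ) / (e * N * x + (t + 1) * (1 - x))
      - ((N : ℝ) - 1 + x) / (e * ((N : ℝ) * x + 1 - x) + (t + 1) * (1 - x))) :
    ∀ x ∈ Set.Icc (0:ℝ) 1,
      HasSum (fun k : ℕ => PNi N (N + k) x * g (uNi N (N + k) x)) (1 / (e * x + t + 1)) := by
  rintro x ⟨hx, -⟩
  have ha : 0 < x + N - 1 := by
    have : (2 : ℝ) ≤ N := by exact_mod_cast hN
    linarith
  have hD : 0 < e * x + t + 1 := by nlinarith [ht.1]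
  have key := (gTail_antitone ha he.le hD).hasSum_sub_succ (tendsto_gTail_atTop he)
  rw [gTail_zero ha, sub_zero, ← funext (PNi_mul_gFun_uNi ha he.le hD (by omega))] at key
  subst hg
  exact key
end

section
/- Let v, w be constants with 0 < v ≤ w and let φ : [0,1] → ℝ be continuous with φ(x) ≤ 0 for all x, such that v(−φ(x)) ≤ Vφ(x) ≤ w(−φ(x)) for all x ∈ [0,1]. Then for every integer n ≥ 1 and every x ∈ [0,1], v^n (−φ(x)) ≤ (−1)^{n+1} V^n φ(x) ≤ w^n (−φ(x)), where V^n denotes the n-th iterate of V. -/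
/-!
Each summand of `V g` is a nonnegative combination of values of `g` on `[0,1]`, so `V` is
linear and antitone on continuous functions, and it maps them to continuous functions (the
series converges uniformly, its `k`-th term being `O(1/k²)`). Writing
`ψₙ = (-1)^(n+1) Vⁿ φ`, we have `ψₙ₊₁ = -V ψₙ`; applying the antitone map `-V` to
`vⁿ (-φ) ≤ ψₙ ≤ wⁿ (-φ)` and using `v (-φ) ≤ V φ ≤ w (-φ)` gives the bounds
for `n + 1`.
-/

open MeasureTheory Set Filter Topology

/-- The operator V with (Uf)' = -V f':
`V g(x) = -Σ_{i ≥ N} [ (i+1-N)/(x+i)² ∫_{u_{N,i}(x)}^{u_{N,i+1}(x)} g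
          + N(x+N-1)/((x+i-1)(x+i)³) g(u_{N,i}(x)) ]`, indexed by i = N + k. -/
noncomputable def V (N : ℕ) (g : ℝ → ℝ) (x : ℝ) : ℝ :=
  -∑' k : ℕ,
    ((((N + k : ℕ) : ℝ) + 1 - N) / (x + ((N + k : ℕ) : ℝ)) ^ 2
        * (∫ u in (uNi N (N + k) x)..(uNi N (N + k + 1) x), g u)
      + ((N : ℝ) * (x + N - 1)) / ((x + ((N + k : ℕ) : ℝ) - 1) * (x + ((N + k : ℕ) : ℝ)) ^ 3)
        * g (uNi N (N + k) x))

theorem summable_div_add_one_sq (C : ℝ) : Summable fun k : ℕ => C / ((k : ℝ) + 1) ^ 2 := by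
  have h := (summable_nat_add_iff 1).2 (Real.summable_one_div_nat_pow.2 one_lt_two)
  exact (h.mul_left C).congr fun k => by push_cast; ring

theorem continuousOn_intervalIntegral_of_mapsTo {α : Type*} [TopologicalSpace α]
    {g : ℝ → ℝ} {a b : α → ℝ} {s : Set α} {p q : ℝ} (hpq : p ≤ q)
    (hg : ContinuousOn g (Icc p q)) (ha : ContinuousOn a s) (hb : ContinuousOn b s)
    (has : MapsTo a s (Icc p q)) (hbs : MapsTo b s (Icc p q)) :
    ContinuousOn (fun x => ∫ u in a x..b x, g u) s := by
  have hG : ContinuousOn (fun t => ∫ u in p..t, g u) (Icc p q) := by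
    have hgi : IntegrableOn g (uIcc p q) := by
      rw [uIcc_of_le hpq]; exact hg.integrableOn_Icc
    simpa only [uIcc_of_le hpq] using intervalIntegral.continuousOn_primitive_interval hgi
  have hint : ∀ t ∈ Icc p q, IntervalIntegrable g volume p t := fun t ht =>
    (hg.intervalIntegrable_of_Icc hpq).mono_set <| by
      rw [uIcc_of_le ht.1, uIcc_of_le hpq]; exact Icc_subset_Icc_right ht.2
  have hdiff : ContinuousOn (fun x => (∫ u in p..b x, g u) - ∫ u in p..a x, g u) s :=
    (hG.comp hb hbs).sub (hG.comp ha has)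
  refine hdiff.congr fun x hx => ?_
  exact (intervalIntegral.integral_interval_sub_left (hint _ (hbs hx)) (hint _ (has hx))).symm

theorem bounds_iterate_of_antitoneOn {α : Type*} [TopologicalSpace α] {s : Set α}
    {T : (α → ℝ) → α → ℝ} (hT_cont : ∀ g, ContinuousOn g s → ContinuousOn (T g) s)
    (hT_anti : ∀ {g h}, ContinuousOn g s → ContinuousOn h s → (∀ y ∈ s, g y ≤ h y) →
      ∀ x ∈ s, T h x ≤ T g x)
    (hT_const_mul : ∀ c g x, T (fun y => c * g y) x = c * T g x)
    {v w : ℝ} (hv : 0 ≤ v) (hw : 0 ≤ w) {φ : α → ℝ} (hφ : ContinuousOn φ s)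
    (hTφ : ∀ x ∈ s, v * (-φ x) ≤ T φ x ∧ T φ x ≤ w * (-φ x)) (n : ℕ) :
    ∀ x ∈ s, v ^ n * (-φ x) ≤ (-1 : ℝ) ^ (n + 1) * T^[n] φ x ∧
      (-1 : ℝ) ^ (n + 1) * T^[n] φ x ≤ w ^ n * (-φ x) := by
  have hcont : ∀ n, ContinuousOn (T^[n] φ) s := by
    intro n
    induction n with
    | zero => exact hφ
    | succ n ih => rw [Function.iterate_succ']; exact hT_cont _ ih
  induction n with
  | zero => intro x _; simp
  | succ n ih =>
    intro x hx
    set ψ := fun y => (-1 : ℝ) ^ (n + 1) * T^[n] φ y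
    have hψ : ContinuousOn ψ s := continuousOn_const.mul (hcont n)
    have hcφ : ∀ c : ℝ, ContinuousOn (fun y => c * φ y) s := fun _ =>
      continuousOn_const.mul hφ
    have hstep : (-1 : ℝ) ^ (n + 1 + 1) * T^[n + 1] φ x = -T ψ x := by
      rw [Function.iterate_succ_apply', hT_const_mul, pow_succ]; ring
    have hlow : T ψ x ≤ -v ^ n * T φ x := by
      rw [← hT_const_mul]
      exact hT_anti (hcφ _) hψ (fun y hy => by linarith [(ih y hy).1]) x hx
    have hup : -w ^ n * T φ x ≤ T ψ x := by
      rw [← hT_const_mul]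
      exact hT_anti hψ (hcφ _) (fun y hy => by linarith [(ih y hy).2]) x hx
    have hvn : 0 ≤ v ^ n := pow_nonneg hv n
    have hwn : 0 ≤ w ^ n := pow_nonneg hw n
    obtain ⟨hTφ_low, hTφ_up⟩ := hTφ x hx
    rw [hstep, pow_succ, pow_succ]
    constructor
    · linarith [mul_le_mul_of_nonneg_left hTφ_low hvn]
    · linarith [mul_le_mul_of_nonneg_left hTφ_up hwn]

noncomputable def intCoeff (N k : ℕ) (x : ℝ) : ℝ :=
  (((N + k : ℕ) : ℝ) + 1 - N) / (x + ((N + k : ℕ) : ℝ)) ^ 2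

noncomputable def ptCoeff (N k : ℕ) (x : ℝ) : ℝ :=
  ((N : ℝ) * (x + N - 1)) / ((x + ((N + k : ℕ) : ℝ) - 1) * (x + ((N + k : ℕ) : ℝ)) ^ 3)

noncomputable def Vterm (N : ℕ) (g : ℝ → ℝ) (x : ℝ) (k : ℕ) : ℝ :=
  intCoeff N k x * (∫ u in uNi N (N + k) x..uNi N (N + k + 1) x, g u)
    + ptCoeff N k x * g (uNi N (N + k) x)

theorem V_eq_neg_tsum_Vterm (N : ℕ) (g : ℝ → ℝ) (x : ℝ) :
    V N g x = -∑' k, Vterm N g x k :=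
  rfl

section Estimates

variable {N : ℕ} {x : ℝ}

theorem add_two_le_add_natCast (hN : 2 ≤ N) (hx : 0 ≤ x) (k : ℕ) :
    (k : ℝ) + 2 ≤ x + ((N + k : ℕ) : ℝ) := by
  have : (2 : ℝ) ≤ N := by exact_mod_cast hN
  push_cast; linarith

theorem uNi_mem_Icc (hx : 0 ≤ x) (k : ℕ) : uNi N (N + k) x ∈ Icc (0 : ℝ) 1 := by
  have hNd : (N : ℝ) ≤ x + ((N + k : ℕ) : ℝ) := by
    push_cast; linarith [(k.cast_nonneg : (0 : ℝ) ≤ k)]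
  have hd : 0 ≤ x + ((N + k : ℕ) : ℝ) := by positivity
  refine ⟨?_, ?_⟩ <;> unfold uNi
  · linarith [div_le_one_of_le₀ hNd hd]
  · linarith [div_nonneg (Nat.cast_nonneg N : (0 : ℝ) ≤ N) hd]

theorem uNi_succ_sub_uNi (hN : 2 ≤ N) (hx : 0 ≤ x) (k : ℕ) :
    uNi N (N + k + 1) x - uNi N (N + k) x
      = N / ((x + ((N + k : ℕ) : ℝ)) * (x + ((N + k : ℕ) : ℝ) + 1)) := by
  have hd0 : x + ((N + k : ℕ) : ℝ) ≠ 0 := by positivity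
  have hd1 : x + ((N + k : ℕ) : ℝ) + 1 ≠ 0 := by positivity
  unfold uNi
  push_cast at hd0 hd1 ⊢
  field_simp
  ring

theorem uNi_le_uNi_succ (hN : 2 ≤ N) (hx : 0 ≤ x) (k : ℕ) :
    uNi N (N + k) x ≤ uNi N (N + k + 1) x := by
  have := uNi_succ_sub_uNi hN hx k
  have : 0 ≤ (N : ℝ) / ((x + ((N + k : ℕ) : ℝ)) * (x + ((N + k : ℕ) : ℝ) + 1)) := by
    positivity
  linarith

theorem uNi_succ_sub_uNi_le (hN : 2 ≤ N) (hx : 0 ≤ x) (k : ℕ) :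
    uNi N (N + k + 1) x - uNi N (N + k) x ≤ N / ((k : ℝ) + 1) ^ 2 := by
  have hd := add_two_le_add_natCast hN hx k
  rw [uNi_succ_sub_uNi hN hx k, sq]
  exact div_le_div_of_nonneg_left (by positivity) (by positivity)
    (mul_le_mul (by linarith) (by linarith) (by positivity) (by positivity))

theorem intCoeff_eq (N k : ℕ) (x : ℝ) :
    intCoeff N k x = ((k : ℝ) + 1) / (x + ((N + k : ℕ) : ℝ)) ^ 2 := by
  unfold intCoeff; push_cast; ring_nf

theorem intCoeff_nonneg (N k : ℕ) (x : ℝ) : 0 ≤ intCoeff N k x := by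
  rw [intCoeff_eq]; positivity

theorem intCoeff_le_one (hN : 2 ≤ N) (hx : 0 ≤ x) (k : ℕ) : intCoeff N k x ≤ 1 := by
  have hd := add_two_le_add_natCast hN hx k
  rw [intCoeff_eq, div_le_one (by positivity)]
  nlinarith

theorem ptCoeff_nonneg (hN : 2 ≤ N) (hx : 0 ≤ x) (k : ℕ) : 0 ≤ ptCoeff N k x := by
  have hd := add_two_le_add_natCast hN hx k
  have : (2 : ℝ) ≤ N := by exact_mod_cast hN
  unfold ptCoeff
  apply div_nonneg (mul_nonneg (by positivity) (by linarith))
  apply mul_nonneg (by linarith) (pow_nonneg (by linarith) 3)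

theorem ptCoeff_le (hN : 2 ≤ N) (hx : x ∈ Icc (0 : ℝ) 1) (k : ℕ) :
    ptCoeff N k x ≤ (N : ℝ) ^ 2 / ((k : ℝ) + 1) ^ 2 := by
  have hd := add_two_le_add_natCast hN hx.1 k
  have : (2 : ℝ) ≤ N := by exact_mod_cast hN
  set d := x + ((N + k : ℕ) : ℝ)
  have hd3 : d ≤ d ^ 3 := by nlinarith [sq_nonneg d]
  unfold ptCoeff
  apply div_le_div₀ (by positivity) (by nlinarith [hx.2]) (by positivity)
  calc ((k : ℝ) + 1) ^ 2 = ((k : ℝ) + 1) * ((k : ℝ) + 1) := sq _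
    _ ≤ (d - 1) * d := by gcongr <;> linarith
    _ ≤ (d - 1) * d ^ 3 := by gcongr; linarith

theorem norm_Vterm_le (hN : 2 ≤ N) (hx : x ∈ Icc (0 : ℝ) 1) {g : ℝ → ℝ} {M : ℝ}
    (hM : ∀ y ∈ Icc (0 : ℝ) 1, ‖g y‖ ≤ M) (k : ℕ) :
    ‖Vterm N g x k‖ ≤ M * (N + N ^ 2) / ((k : ℝ) + 1) ^ 2 := by
  have hM0 : 0 ≤ M := (norm_nonneg _).trans (hM 0 (left_mem_Icc.2 zero_le_one))
  have hab := uNi_le_uNi_succ hN hx.1 k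
  have ha := uNi_mem_Icc (N := N) hx.1 k
  have hb := uNi_mem_Icc (N := N) hx.1 (k + 1)
  have hint : ‖∫ u in uNi N (N + k) x..uNi N (N + k + 1) x, g u‖
      ≤ M * (N / ((k : ℝ) + 1) ^ 2) := by
    refine (intervalIntegral.norm_integral_le_of_norm_le_const (C := M) fun y hy => ?_).trans ?_
    · rw [uIoc_of_le hab] at hy
      exact hM y ⟨ha.1.trans hy.1.le, hy.2.trans hb.2⟩
    · rw [abs_of_nonneg (sub_nonneg.2 hab)]
      exact mul_le_mul_of_nonneg_left (uNi_succ_sub_uNi_le hN hx.1 k) hM0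
  have hA := intCoeff_nonneg N k x
  have hB := ptCoeff_nonneg hN hx.1 k
  calc ‖Vterm N g x k‖
      ≤ intCoeff N k x * ‖∫ u in uNi N (N + k) x..uNi N (N + k + 1) x, g u‖
          + ptCoeff N k x * ‖g (uNi N (N + k) x)‖ := by
        refine (norm_add_le _ _).trans_eq ?_
        rw [norm_mul, norm_mul, Real.norm_of_nonneg hA, Real.norm_of_nonneg hB]
    _ ≤ 1 * (M * (N / ((k : ℝ) + 1) ^ 2)) + (N : ℝ) ^ 2 / ((k : ℝ) + 1) ^ 2 * M := by
        gcongr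
        exacts [intCoeff_le_one hN hx.1 k, ptCoeff_le hN hx k, hM _ ha]
    _ = M * (N + N ^ 2) / ((k : ℝ) + 1) ^ 2 := by ring

end Estimates

section Operator

variable {N : ℕ}

theorem summable_Vterm (hN : 2 ≤ N) {x : ℝ} (hx : x ∈ Icc (0 : ℝ) 1) {g : ℝ → ℝ}
    (hg : ContinuousOn g (Icc 0 1)) : Summable (Vterm N g x) := by
  obtain ⟨M, hM⟩ := isCompact_Icc.exists_bound_of_continuousOn hg
  exact (summable_div_add_one_sq _).of_norm_bounded (norm_Vterm_le hN hx hM)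

theorem Vterm_mono (hN : 2 ≤ N) {x : ℝ} (hx : x ∈ Icc (0 : ℝ) 1) {g h : ℝ → ℝ}
    (hg : ContinuousOn g (Icc 0 1)) (hh : ContinuousOn h (Icc 0 1))
    (hgh : ∀ y ∈ Icc (0 : ℝ) 1, g y ≤ h y) (k : ℕ) : Vterm N g x k ≤ Vterm N h x k := by
  have hab := uNi_le_uNi_succ hN hx.1 k
  have ha := uNi_mem_Icc (N := N) hx.1 k
  have hb := uNi_mem_Icc (N := N) hx.1 (k + 1)
  have hsub : Icc (uNi N (N + k) x) (uNi N (N + k + 1) x) ⊆ Icc 0 1 :=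
    Icc_subset_Icc ha.1 hb.2
  have hint : (∫ u in uNi N (N + k) x..uNi N (N + k + 1) x, g u)
      ≤ ∫ u in uNi N (N + k) x..uNi N (N + k + 1) x, h u :=
    intervalIntegral.integral_mono_on hab ((hg.mono hsub).intervalIntegrable_of_Icc hab)
      ((hh.mono hsub).intervalIntegrable_of_Icc hab) fun y hy => hgh y (hsub hy)
  unfold Vterm
  gcongr
  exacts [intCoeff_nonneg N k x, ptCoeff_nonneg hN hx.1 k, hgh _ ha]

theorem V_antitoneOn (hN : 2 ≤ N) {g h : ℝ → ℝ} (hg : ContinuousOn g (Icc 0 1))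
    (hh : ContinuousOn h (Icc 0 1)) (hgh : ∀ y ∈ Icc (0 : ℝ) 1, g y ≤ h y) :
    ∀ x ∈ Icc (0 : ℝ) 1, V N h x ≤ V N g x := fun _ hx =>
  neg_le_neg <| (summable_Vterm hN hx hg).tsum_le_tsum (Vterm_mono hN hx hg hh hgh)
    (summable_Vterm hN hx hh)

theorem V_const_mul (N : ℕ) (c : ℝ) (g : ℝ → ℝ) (x : ℝ) :
    V N (fun y => c * g y) x = c * V N g x := by
  have hterm : ∀ k, Vterm N (fun y => c * g y) x k = c * Vterm N g x k := fun k => by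
    simp only [Vterm, intervalIntegral.integral_const_mul]; ring
  rw [V_eq_neg_tsum_Vterm, V_eq_neg_tsum_Vterm, tsum_congr hterm, tsum_mul_left, mul_neg]

theorem continuousOn_uNi (hN : 2 ≤ N) (k : ℕ) : ContinuousOn (uNi N (N + k)) (Icc 0 1) := by
  refine continuousOn_const.sub (continuousOn_const.div (by fun_prop) fun x hx => ?_)
  linarith [add_two_le_add_natCast hN hx.1 k, (k.cast_nonneg : (0 : ℝ) ≤ k)]

theorem continuousOn_Vterm (hN : 2 ≤ N) {g : ℝ → ℝ} (hg : ContinuousOn g (Icc 0 1))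
    (k : ℕ) : ContinuousOn (fun x => Vterm N g x k) (Icc 0 1) := by
  have hd : ∀ x ∈ Icc (0 : ℝ) 1, 1 < x + ((N + k : ℕ) : ℝ) := fun x hx => by
    linarith [add_two_le_add_natCast hN hx.1 k, (k.cast_nonneg : (0 : ℝ) ≤ k)]
  have hA : ContinuousOn (intCoeff N k) (Icc 0 1) :=
    continuousOn_const.div (by fun_prop) fun x hx => by
      have := hd x hx; positivity
  have hB : ContinuousOn (ptCoeff N k) (Icc 0 1) :=
    (by fun_prop : Continuous fun x : ℝ => (N : ℝ) * (x + N - 1)).continuousOn.div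
      (by fun_prop) fun x hx => by
        have := hd x hx
        exact mul_ne_zero (by linarith) (by positivity)
  have hI := continuousOn_intervalIntegral_of_mapsTo zero_le_one hg (continuousOn_uNi hN k)
    (continuousOn_uNi hN (k + 1)) (fun x hx => uNi_mem_Icc hx.1 k)
    (fun x hx => uNi_mem_Icc hx.1 (k + 1))
  exact (hA.mul hI).add (hB.mul (hg.comp (continuousOn_uNi hN k) fun x hx => uNi_mem_Icc hx.1 k))

theorem continuousOn_V (hN : 2 ≤ N) {g : ℝ → ℝ} (hg : ContinuousOn g (Icc 0 1)) :
    ContinuousOn (V N g) (Icc 0 1) := by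
  obtain ⟨M, hM⟩ := isCompact_Icc.exists_bound_of_continuousOn hg
  exact (continuousOn_tsum (continuousOn_Vterm hN hg) (summable_div_add_one_sq _)
    fun k x hx => norm_Vterm_le hN hx hM k).neg

end Operator

theorem stmt17_general (N : ℕ) (hN : 2 ≤ N) (v w : ℝ) (hv : 0 < v) (hvw : v ≤ w)
    (φ : ℝ → ℝ) (hφc : ContinuousOn φ (Set.Icc (0:ℝ) 1))
    (hVφ : ∀ x ∈ Set.Icc (0:ℝ) 1, v * (-φ x) ≤ V N φ x ∧ V N φ x ≤ w * (-φ x)) :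
    ∀ n : ℕ, 1 ≤ n → ∀ x ∈ Set.Icc (0:ℝ) 1,
      v ^ n * (-φ x) ≤ (-1 : ℝ) ^ (n + 1) * (V N)^[n] φ x ∧
      (-1 : ℝ) ^ (n + 1) * (V N)^[n] φ x ≤ w ^ n * (-φ x) := fun n _ =>
  bounds_iterate_of_antitoneOn (fun _ => continuousOn_V hN) (V_antitoneOn hN) (V_const_mul N)
    hv.le (hv.le.trans hvw) hφc hVφ n

theorem stmt17 (N : ℕ) (hN : 2 ≤ N) (v w : ℝ) (hv : 0 < v) (hvw : v ≤ w)
    (φ : ℝ → ℝ) (hφc : ContinuousOn φ (Set.Icc (0:ℝ) 1))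
    (hφ : ∀ x ∈ Set.Icc (0:ℝ) 1, φ x ≤ 0)
    (hVφ : ∀ x ∈ Set.Icc (0:ℝ) 1, v * (-φ x) ≤ V N φ x ∧ V N φ x ≤ w * (-φ x)) :
    ∀ n : ℕ, 1 ≤ n → ∀ x ∈ Set.Icc (0:ℝ) 1,
      v ^ n * (-φ x) ≤ (-1 : ℝ) ^ (n + 1) * (V N)^[n] φ x ∧
      (-1 : ℝ) ^ (n + 1) * (V N)^[n] φ x ≤ w ^ n * (-φ x) :=
  stmt17_general N hN v w hv hvw φ hφc hVφ
end
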